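/- arXiv:2211.10334 — 3 statements merged into one kernel-verified Lean document; each statement's English description precedes it below -/
import Mathlib

section
/- Suppose there is a constant w_o with 0 < w_o ≤ 1 and β(k) ≤ 1 − w_o for all k. Then for all integers k ≥ l ≥ 0 and every row index i, the matrix product W(l,k) = M(l) M(l+1) ⋯ M(k) satisfies Σ_{j=1}^n W(l,k)_{ij} ≥ w_o^{k−l+1}. -/
open Matrix BigOperators

/-- The forward matrix product `W(l,k) = M(l) M(l+1) ⋯ M(k)` (the identity when `k < l`). -/
noncomputable def Wmat {n : ℕ} (M : ℕ → Matrix (Fin n) (Fin n) ℝ) (l k : ℕ) :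
    Matrix (Fin n) (Fin n) ℝ :=
  if l ≤ k then ((List.range (k + 1 - l)).map (fun t => M (l + t))).prod else 1

/-- Lower bound on the row sums of the products `W(l,k)`:
if `0 < w_o ≤ 1` and `β(k) ≤ 1 − w_o` for all `k`, then every row sum of
`W(l,k)` is at least `w_o^{k−l+1}`. -/
theorem W_row_sums_lower_bound
    (n : ℕ) (hn : 2 ≤ n)
    (P : Matrix (Fin n) (Fin n) ℝ)
    (hPnonneg : ∀ i j, 0 ≤ P i j)
    (hPcol : ∀ j, ∑ i, P i j = 1)
    (hPdiag : ∀ i, 0 < P i i)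
    (hPirred : ∀ i j, ∃ m : ℕ, 1 ≤ m ∧ 0 < (P ^ m) i j)
    (β : ℕ → ℝ) (hβ : ∀ k, 0 ≤ β k ∧ β k < 1)
    (M : ℕ → Matrix (Fin n) (Fin n) ℝ)
    (hMdiag : ∀ k i, M k i i = 1 - β k * (1 - P i i))
    (hMoff : ∀ k i j, i ≠ j → M k i j = β k * P i j)
    (w_o : ℝ) (hw_o : 0 < w_o) (hw_o' : w_o ≤ 1)
    (hβw : ∀ k, β k ≤ 1 - w_o) :
    ∀ l k : ℕ, l ≤ k → ∀ i, w_o ^ (k - l + 1) ≤ ∑ j, Wmat M l k i j := by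
  -- P entries are at most 1
  have hPle1 : ∀ i j, P i j ≤ 1 := by
    intro i j
    calc P i j ≤ ∑ i', P i' j := by
          exact Finset.single_le_sum (fun i' _ => hPnonneg i' j) (Finset.mem_univ i)
      _ = 1 := hPcol j
  -- M entries are nonnegative
  have hMnn : ∀ k i j, 0 ≤ M k i j := by
    intro k i j
    by_cases h : i = j
    · subst h
      rw [hMdiag]
      have h1 : β k * (1 - P i i) ≤ 1 * 1 := by
        apply mul_le_mul (le_of_lt (hβ k).2)
        · linarith [hPdiag i]
        · linarith [hPle1 i i]
        · linarith
      linarith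
    · rw [hMoff k i j h]
      exact mul_nonneg (hβ k).1 (hPnonneg i j)
  -- row sums of M are at least w_o
  have hMrow : ∀ k i, w_o ≤ ∑ j, M k i j := by
    intro k i
    have h1 : w_o ≤ M k i i := by
      rw [hMdiag]
      have h2 : β k * (1 - P i i) ≤ (1 - w_o) * 1 := by
        apply mul_le_mul (hβw k)
        · linarith [hPdiag i]
        · linarith [hPle1 i i]
        · linarith
      linarith
    calc w_o ≤ M k i i := h1
      _ ≤ ∑ j, M k i j :=
        Finset.single_le_sum (fun j _ => hMnn k i j) (Finset.mem_univ i)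
  -- main induction on d, with k = l + d
  have key : ∀ l d : ℕ,
      (∀ i j, 0 ≤ Wmat M l (l + d) i j) ∧
      (∀ i, w_o ^ (d + 1) ≤ ∑ j, Wmat M l (l + d) i j) := by
    intro l d
    induction d with
    | zero =>
      have hW : Wmat M l (l + 0) = M l := by
        simp [Wmat, List.range_succ]
      rw [hW]
      exact ⟨fun i j => hMnn l i j, fun i => by simpa using hMrow l i⟩
    | succ d ih =>
      obtain ⟨ihnn, ihrow⟩ := ih
      have hW : Wmat M l (l + (d + 1)) = Wmat M l (l + d) * M (l + (d + 1)) := by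
        have h1 : l ≤ l + (d + 1) := Nat.le_add_right _ _
        have h2 : l ≤ l + d := Nat.le_add_right _ _
        simp only [Wmat, if_pos h1, if_pos h2]
        have h3 : l + (d + 1) + 1 - l = (l + d + 1 - l) + 1 := by omega
        rw [h3, List.range_succ, List.map_append, List.prod_append]
        have h4 : l + d + 1 - l = d + 1 := by omega
        simp [h4]
      rw [hW]
      constructor
      · intro i j
        rw [Matrix.mul_apply]
        exact Finset.sum_nonneg fun m _ =>
          mul_nonneg (ihnn i m) (hMnn _ m j)
      · intro i
        have : ∑ j, (Wmat M l (l + d) * M (l + (d + 1))) i j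
            = ∑ m, Wmat M l (l + d) i m * ∑ j, M (l + (d + 1)) m j := by
          simp only [Matrix.mul_apply, Finset.mul_sum]
          rw [Finset.sum_comm]
        rw [this]
        have h5 : ∑ m, Wmat M l (l + d) i m * w_o
            ≤ ∑ m, Wmat M l (l + d) i m * ∑ j, M (l + (d + 1)) m j := by
          apply Finset.sum_le_sum
          intro m _
          exact mul_le_mul_of_nonneg_left (hMrow _ m) (ihnn i m)
        have h6 : ∑ m, Wmat M l (l + d) i m * w_o
            = (∑ m, Wmat M l (l + d) i m) * w_o := by
          rw [Finset.sum_mul]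
        have h7 : w_o ^ (d + 1) * w_o ≤ (∑ m, Wmat M l (l + d) i m) * w_o :=
          mul_le_mul_of_nonneg_right (ihrow i) (le_of_lt hw_o)
        calc w_o ^ (d + 1 + 1) = w_o ^ (d + 1) * w_o := by ring
          _ ≤ (∑ m, Wmat M l (l + d) i m) * w_o := h7
          _ = ∑ m, Wmat M l (l + d) i m * w_o := h6.symm
          _ ≤ _ := h5
  intro l k hlk i
  obtain ⟨d, rfl⟩ : ∃ d, k = l + d := ⟨k - l, by omega⟩
  have h8 : l + d - l + 1 = d + 1 := by omega
  rw [h8]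
  exact (key l d).2 i
end

section
/- (Lemma 1) Assume the communication is noiseless and that β satisfies Assumption (β) and θ satisfies Assumption (θ). Then there exists a constant y_o > 0 such that y_i(k) > y_o for all k ≥ 1 and all i ∈ {1,…,n}; in particular the ratio states z_i(k) = (1/y_i(k)) x_i(k) are well defined for all k ≥ 1 and all i. -/
open Matrix BigOperators

lemma exp_neg_two_le_one_sub' {t : ℝ} (h0 : 0 ≤ t) (h2 : t ≤ 1/2) :
    Real.exp (-2 * t) ≤ 1 - t := by
  have h1 : (2*t) + 1 ≤ Real.exp (2 * t) := Real.add_one_le_exp (2 * t)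
  have hpos : (0:ℝ) < 1 + 2 * t := by linarith
  have : Real.exp (-2 * t) ≤ (1 + 2*t)⁻¹ := by
    rw [show (-2*t : ℝ) = -(2*t) by ring, Real.exp_neg]
    exact inv_anti₀ hpos (by linarith)
  refine this.trans ?_
  rw [inv_le_iff_one_le_mul₀ hpos]
  nlinarith

/-- (Lemma 1) In the noiseless case, under Assumption (β) and Assumption (θ),
the denominator iterates `y_i(k)` stay uniformly bounded away from zero:
there is `y_o > 0` with `y_i(k) > y_o` for all `k ≥ 1` and all `i`, so the
ratio states `z_i(k) = (1/y_i(k)) x_i(k)` are well defined. -/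
theorem nrpushsum_noiseless_y_bounded_below
    (n p : ℕ) (hn : 2 ≤ n)
    (P : Matrix (Fin n) (Fin n) ℝ)
    (hPnonneg : ∀ i j, 0 ≤ P i j)
    (hPcol : ∀ j, ∑ i, P i j = 1)
    (hPdiag : ∀ i, 0 < P i i)
    (hPirred : ∀ i j, ∃ m : ℕ, 1 ≤ m ∧ 0 < (P ^ m) i j)
    (β : ℕ → ℝ) (hβ : ∀ k, 0 ≤ β k ∧ β k < 1)
    (M : ℕ → Matrix (Fin n) (Fin n) ℝ)
    (hMdiag : ∀ k i, M k i i = 1 - β k * (1 - P i i))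
    (hMoff : ∀ k i j, i ≠ j → M k i j = β k * P i j)
    -- Assumption (β)
    (K_β : ℕ) (hK_β : 1 ≤ K_β) (q a b : ℝ)
    (hq : 1 < q) (ha : 0 ≤ a) (hab : a ≤ b)
    (hβbound : ∀ k : ℕ, K_β ≤ k →
      a * (k : ℝ) ^ (-q) ≤ β k ∧ β k ≤ b * (k : ℝ) ^ (-q))
    -- Assumption (θ)
    (θ : ℕ → ℝ) (hθnonneg : ∀ k, 0 ≤ θ k) (hθsum : Summable θ)
    -- noiseless NR-PushSum iterates
    (u : Fin n → EuclideanSpace ℝ (Fin p))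
    (x : ℕ → Fin n → EuclideanSpace ℝ (Fin p))
    (y : ℕ → Fin n → ℝ)
    (hx0 : ∀ i, x 0 i = u i)
    (hy0 : ∀ i, y 0 i = 1)
    (hx : ∀ k i, x (k + 1) i = (∑ j, M k i j • x k j) + θ k • x 0 i)
    (hy : ∀ k, y (k + 1) = (M k).mulVec (y k) + θ k • y 0) :
    ∃ y_o : ℝ, 0 < y_o ∧ ∀ k : ℕ, 1 ≤ k → ∀ i, y_o < y k i := by
  -- β is summable
  have hβsum : Summable β := by
    have hs0 : Summable (fun m : ℕ => (m : ℝ) ^ (-q)) :=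
      (Real.summable_nat_rpow.2 (by linarith))
    have hs1 : Summable (fun m : ℕ => b * ((m + K_β : ℕ) : ℝ) ^ (-q)) :=
      (summable_nat_add_iff (f := fun m : ℕ => b * (m : ℝ) ^ (-q)) K_β).2
        (hs0.mul_left b)
    rw [← summable_nat_add_iff K_β]
    refine Summable.of_nonneg_of_le (fun m => (hβ _).1) (fun m => ?_) hs1
    exact (hβbound (m + K_β) (Nat.le_add_left _ _)).2
  -- choose K beyond which β ≤ 1/2
  obtain ⟨K, hK⟩ : ∃ K : ℕ, ∀ m, K ≤ m → β m ≤ 1/2 := by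
    have h := hβsum.tendsto_atTop_zero.eventually_lt_const (show (0:ℝ) < 1/2 by norm_num)
    rcases (Filter.eventually_atTop.1 h) with ⟨K, hK⟩
    exact ⟨K, fun m hm => (hK m hm).le⟩
  -- key quantities
  set pr : ℕ → ℝ := fun k => ∏ m ∈ Finset.range k, (1 - β m) with hprdef
  have hfac_pos : ∀ m : ℕ, 0 < 1 - β m := fun m => by linarith [(hβ m).2]
  have hpr_pos : ∀ k, 0 < pr k := fun k =>
    Finset.prod_pos (fun m _ => hfac_pos m)
  -- y k i ≥ pr k
  have hy_ge : ∀ k i, pr k ≤ y k i := by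
    intro k
    induction k with
    | zero => intro i; simp [hy0, hprdef]
    | succ k ih =>
      intro i
      have hyk : y (k + 1) i = (∑ j, M k i j * y k j) + θ k := by
        rw [hy k]
        simp [Matrix.mulVec, dotProduct, hy0]
      have hMnonneg : ∀ j, 0 ≤ M k i j := by
        intro j
        by_cases hij : i = j
        · subst hij
          rw [hMdiag]
          have hPle : P i i ≤ 1 := by
            have := Finset.single_le_sum (f := fun i' => P i' i)
              (fun j _ => hPnonneg j i) (Finset.mem_univ i)
            rw [hPcol i] at this; exact this
          nlinarith [(hβ k).1, (hβ k).2, (hPdiag i).le]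
        · rw [hMoff k i j hij]
          exact mul_nonneg (hβ k).1 (hPnonneg i j)
      have hterm : M k i i * y k i ≤ ∑ j, M k i j * y k j := by
        refine Finset.single_le_sum (f := fun j => M k i j * y k j)
          (fun j _ => mul_nonneg (hMnonneg j) ?_) (Finset.mem_univ i)
        exact le_trans (hpr_pos k).le (ih j)
      have hdiag : 1 - β k ≤ M k i i := by
        rw [hMdiag]
        have hPle : P i i ≤ 1 := by
          have := Finset.single_le_sum (f := fun i' => P i' i)
            (fun j _ => hPnonneg j i) (Finset.mem_univ i)
          rw [hPcol i] at this; exact this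
        nlinarith [(hβ k).1, hPdiag i]
      have hprod : pr (k + 1) = pr k * (1 - β k) := Finset.prod_range_succ _ _
      have h1 : pr k * (1 - β k) ≤ M k i i * y k i := by
        rw [mul_comm (M k i i)]
        exact mul_le_mul (ih i) hdiag (hfac_pos k).le
          (le_trans (hpr_pos k).le (ih i))
      rw [hyk, hprod]
      have := hθnonneg k
      linarith
  -- tail sum and constants
  set S : ℝ := ∑' m : ℕ, β (m + K) with hSdef
  have hβK : Summable (fun m : ℕ => β (m + K)) := (summable_nat_add_iff K).2 hβsum
  have hSnonneg : 0 ≤ S := tsum_nonneg (fun m => (hβ _).1)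
  set c0 : ℝ := pr K with hc0def
  set c1 : ℝ := Real.exp (-2 * S) with hc1def
  have hc0pos : 0 < c0 := hpr_pos K
  have hc1pos : 0 < c1 := Real.exp_pos _
  have hc1le : c1 ≤ 1 := Real.exp_le_one_iff.2 (by linarith)
  -- pr k ≥ c0 * c1 for all k
  have hpr_ge : ∀ k, c0 * c1 ≤ pr k := by
    intro k
    rcases le_or_gt k K with hkK | hKk
    · have h1 : c0 ≤ pr k := by
        obtain ⟨e, rfl⟩ : ∃ e, K = k + e := ⟨K - k, by omega⟩
        have hsplit : pr (k + e) = pr k * ∏ m ∈ Finset.range e, (1 - β (k + m)) :=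
          Finset.prod_range_add _ _ _
        have hle1 : ∏ m ∈ Finset.range e, (1 - β (k + m)) ≤ 1 :=
          Finset.prod_le_one (fun m _ => (hfac_pos _).le)
            (fun m _ => by linarith [(hβ (k + m)).1])
        rw [hc0def, hsplit]
        nlinarith [hpr_pos k]
      nlinarith [mul_le_mul_of_nonneg_left hc1le hc0pos.le]
    · obtain ⟨d, rfl⟩ : ∃ d, k = K + d := ⟨k - K, by omega⟩
      have hsplit : pr (K + d) = c0 * ∏ m ∈ Finset.range d, (1 - β (K + m)) :=
        Finset.prod_range_add _ _ _
      have hpartial : ∑ m ∈ Finset.range d, β (m + K) ≤ S := by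
        exact Summable.sum_le_tsum _ (fun m _ => (hβ _).1) hβK
      have hexp : c1 ≤ ∏ m ∈ Finset.range d, (1 - β (K + m)) := by
        have h2 : Real.exp (-2 * S) ≤
            Real.exp (∑ m ∈ Finset.range d, (-2 * β (K + m))) := by
          apply Real.exp_le_exp.2
          have : ∑ m ∈ Finset.range d, (-2 * β (K + m)) =
              -2 * ∑ m ∈ Finset.range d, β (m + K) := by
            rw [Finset.mul_sum]
            exact Finset.sum_congr rfl (fun m _ => by rw [add_comm K m])
          rw [this]; nlinarith
        refine h2.trans ?_
        rw [Real.exp_sum]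
        refine Finset.prod_le_prod (fun m _ => (Real.exp_pos _).le) (fun m _ => ?_)
        exact exp_neg_two_le_one_sub' (hβ _).1 (hK _ (Nat.le_add_right _ _))
      rw [hsplit]
      exact mul_le_mul_of_nonneg_left hexp hc0pos.le
  have h3 : 0 < c0 * c1 := mul_pos hc0pos hc1pos
  refine ⟨c0 * c1 / 2, half_pos h3, fun k _ i => ?_⟩
  have h1 := hy_ge k i
  have h2 := hpr_ge k
  linarith
end

section
/- (Lemma 4) Let β satisfy Assumption (β) with β(k) > 0 for all k, and suppose the communication noise satisfies Assumption (noise) with bound δ > 0. Then there exist a sequence θ : ℕ → ℝ satisfying Assumption (θ) and a constant ỹ_o > 0 such that the resulting NR-PushSum iterates satisfy y_i(k) > ỹ_o for all k ≥ 1 and all i ∈ {1,…,n}; in particular the ratio states z_i(k) = x_i(k)/y_i(k) are well defined for all k ≥ 1 and all i. -/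
open Matrix BigOperators

/-- (Lemma 4) Under Assumption (β) with positive `β` and bounded communication
noise, there are a sequence `θ` satisfying Assumption (θ) and a constant
`ỹ_o > 0` such that the resulting NR-PushSum denominator iterates satisfy
`y_i(k) > ỹ_o` for all `k ≥ 1` and all `i`; in particular the ratio states
`z_i(k) = x_i(k)/y_i(k)` are well defined. -/
theorem nrpushsum_noisy_y_bounded_below
    (n : ℕ) (hn : 2 ≤ n)
    (P : Matrix (Fin n) (Fin n) ℝ)
    (hPnonneg : ∀ i j, 0 ≤ P i j)
    (hPcol : ∀ j, ∑ i, P i j = 1)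
    (hPdiag : ∀ i, 0 < P i i)
    (hPirred : ∀ i j, ∃ m : ℕ, 1 ≤ m ∧ 0 < (P ^ m) i j)
    -- Assumption (β), with β positive
    (β : ℕ → ℝ) (hβ : ∀ k, 0 ≤ β k ∧ β k < 1)
    (hβpos : ∀ k, 0 < β k)
    (K_β : ℕ) (hK_β : 1 ≤ K_β) (q a b : ℝ)
    (hq : 1 < q) (ha : 0 ≤ a) (hab : a ≤ b)
    (hβbound : ∀ k : ℕ, K_β ≤ k →
      a * (k : ℝ) ^ (-q) ≤ β k ∧ β k ≤ b * (k : ℝ) ^ (-q))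
    -- mixing matrices
    (M : ℕ → Matrix (Fin n) (Fin n) ℝ)
    (hMdiag : ∀ k i, M k i i = 1 - β k * (1 - P i i))
    (hMoff : ∀ k i j, i ≠ j → M k i j = β k * P i j)
    -- Assumption (noise): bounded per-link noise and its aggregates
    (δ : ℝ) (hδ : 0 < δ)
    (ηx ηy : ℕ → Fin n → Fin n → ℝ)
    (hηxbound : ∀ k i j, |ηx k i j| ≤ δ)
    (hηybound : ∀ k i j, |ηy k i j| ≤ δ)
    (ηX ηY : ℕ → Fin n → ℝ)
    (hηX : ∀ k i, ηX k i =
      ∑ j ∈ Finset.univ.filter (fun j => j ≠ i ∧ 0 < P i j), ηx k i j)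
    (hηY : ∀ k i, ηY k i =
      ∑ j ∈ Finset.univ.filter (fun j => j ≠ i ∧ 0 < P i j), ηy k i j)
    (u : Fin n → ℝ) :
    ∃ θ : ℕ → ℝ, (∀ k, 0 ≤ θ k) ∧ Summable θ ∧
      ∃ yo : ℝ, 0 < yo ∧
        ∀ x y : ℕ → Fin n → ℝ,
          (∀ i, x 0 i = u i) →
          (∀ i, y 0 i = 1) →
          (∀ k, x (k + 1) = (M k).mulVec (x k) + θ k • x 0 + β k • ηX k) →
          (∀ k, y (k + 1) = (M k).mulVec (y k) + θ k • y 0 + β k • ηY k) →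
          ∀ k : ℕ, 1 ≤ k → ∀ i, yo < y k i := by

  have hβsum : Summable β := by
    have h1 : Summable (fun k : ℕ => b * ((k + K_β : ℕ) : ℝ) ^ (-q)) :=
      Summable.mul_left _
        ((summable_nat_add_iff K_β).2 (Real.summable_nat_rpow.2 (by linarith)))
    have h2 : Summable (fun k : ℕ => β (k + K_β)) :=
      Summable.of_nonneg_of_le (fun k => (hβ _).1)
        (fun k => (hβbound (k + K_β) (Nat.le_add_left _ _)).2) h1
    exact (summable_nat_add_iff K_β).1 h2
  refine ⟨fun k => β k * (1 + n * δ),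
    fun k => mul_nonneg (hβ k).1 (by positivity),
    hβsum.mul_right _, 1/2, by norm_num, ?_⟩
  intro x y hx0 hy0 hxrec hyrec k hk i
  have key : ∀ k i, 1 ≤ y k i := by
    intro k
    induction k with
    | zero => intro i; rw [hy0]
    | succ k ih =>
      intro i
      have hβk := (hβ k).1
      have hβk1 := (hβ k).2
      -- P i i ≤ 1
      have hP1 : P i i ≤ 1 := by
        have := Finset.single_le_sum (f := fun j => P j i)
          (fun j _ => hPnonneg j i) (Finset.mem_univ i)
        rw [hPcol i] at this; exact this
      -- M entries nonneg
      have hMnn : ∀ j, 0 ≤ M k i j := by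
        intro j
        by_cases h : i = j
        · subst h; rw [hMdiag]
          nlinarith [hPdiag i]
        · rw [hMoff k i j h]
          exact mul_nonneg hβk (hPnonneg i j)
      -- noise bound
      have hηb : |ηY k i| ≤ n * δ := by
        rw [hηY]
        set s := Finset.univ.filter (fun j => j ≠ i ∧ 0 < P i j) with hs
        calc |∑ j ∈ s, ηy k i j| ≤ ∑ j ∈ s, |ηy k i j| :=
              Finset.abs_sum_le_sum_abs _ _
          _ ≤ ∑ j ∈ s, δ := Finset.sum_le_sum (fun j _ => hηybound k i j)
          _ = s.card * δ := by rw [Finset.sum_const, nsmul_eq_mul]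
          _ ≤ n * δ := by
              apply mul_le_mul_of_nonneg_right _ hδ.le
              have : s.card ≤ n := by
                calc s.card ≤ (Finset.univ : Finset (Fin n)).card :=
                      Finset.card_filter_le _ _
                  _ = n := by simp
              exact_mod_cast this
      have hsum : (1 : ℝ) - β k ≤ ∑ j, M k i j * y k j := by
        have h1 : M k i i * y k i ≤ ∑ j, M k i j * y k j :=
          Finset.single_le_sum (f := fun j => M k i j * y k j)
            (fun j _ => mul_nonneg (hMnn j) (by linarith [ih j]))
            (Finset.mem_univ i)
        have h2 : (1 : ℝ) - β k ≤ M k i i * y k i := by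
          rw [hMdiag]
          have hc : (1:ℝ) - β k ≤ 1 - β k * (1 - P i i) := by
            nlinarith [hPdiag i]
          have hc0 : (0:ℝ) ≤ 1 - β k * (1 - P i i) := by linarith
          calc (1:ℝ) - β k ≤ (1 - β k * (1 - P i i)) * 1 := by linarith
            _ ≤ (1 - β k * (1 - P i i)) * y k i :=
                mul_le_mul_of_nonneg_left (ih i) hc0
        linarith
      have hyi : y (k+1) i
          = (∑ j, M k i j * y k j) + β k * (1 + n * δ) * y 0 i + β k * ηY k i := by
        rw [hyrec k]
        simp [Matrix.mulVec, dotProduct]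
      rw [hyi, hy0 i]
      have hnoise : -(β k * (n * δ)) ≤ β k * ηY k i := by
        have := (abs_le.1 hηb).1
        nlinarith
      nlinarith
  linarith [key k i]
end
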